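/- arXiv:2212.00183 — 2 statements merged into one kernel-verified Lean document; each statement's English description precedes it below -/
import Mathlib

section
/- Let D = Σ_{i=2}^n B_i where (B_i)_{2 ≤ i ≤ n} are independent Bernoulli random variables with P(B_i = 1) = 1/(i-1). For every 0 < ε < 3/2 there exists N such that for all n ≥ N, P(|D - ln n| > ε ln n) ≤ 2 n^{-ε²/12}. -/
/-!
The root degree `D = ∑ Bᵢ` has mean `H_{n-1} = ∑ 1 / (i - 1) ∈ [log n, 1 + log n]`. Since
`1 + p (eᵗ - 1) ≤ exp (p (eᵗ - 1))`, its moment generating function is dominated by that of a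
Poisson variable of mean `H_{n-1}`, and the Chernoff bound at `t = log (1 ± ε)` bounds the two
tails `D ≥ (1 + ε) log n` and `D ≤ (1 - ε) log n` by `exp (ε - h(ε) log n)` and
`exp (-h(-ε) log n)`, where `h(x) = (1 + x) log (1 + x) - x`. As `h(ε) ≥ ε² / 6` on `[0, 2]` and
`h(-ε) ≥ ε² / 2` on `[0, 1)`, both are at most `n ^ (-ε² / 12)` once `ε log n ≥ 12`.
-/

open Real Set MeasureTheory ProbabilityTheory
open scoped ProbabilityTheory

/-- The Cramér rate function of the Poisson law of mean `1`, evaluated at `1 + x`. -/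
noncomputable def poissonRate (x : ℝ) : ℝ := (1 + x) * log (1 + x) - x

lemma poissonRate_zero : poissonRate 0 = 0 := by simp [poissonRate]

lemma hasDerivAt_poissonRate {x : ℝ} (hx : -1 < x) :
    HasDerivAt poissonRate (log (1 + x)) x := by
  have hlin : HasDerivAt (fun y => 1 + y) 1 x := (hasDerivAt_id x).const_add 1
  have h1 : 1 + x ≠ 0 := by linarith
  exact ((hlin.mul (hlin.log h1)).sub (hasDerivAt_id x)).congr_deriv (by field_simp; ring)

lemma sq_div_six_le_poissonRate {x : ℝ} (hx0 : 0 ≤ x) (hx2 : x ≤ 2) :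
    x ^ 2 / 6 ≤ poissonRate x := by
  have hderiv : ∀ y ∈ Icc (0 : ℝ) 2,
      HasDerivAt (fun y => poissonRate y - y ^ 2 / 6) (log (1 + y) - y / 3) y := fun y hy =>
    ((hasDerivAt_poissonRate (by linarith [hy.1])).sub
      ((hasDerivAt_pow 2 y).div_const 6)).congr_deriv (by ring)
  have hmono : MonotoneOn (fun y => poissonRate y - y ^ 2 / 6) (Icc 0 2) := by
    refine monotoneOn_of_hasDerivWithinAt_nonneg (convex_Icc 0 2)
      (fun y hy => (hderiv y hy).continuousAt.continuousWithinAt)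
      (fun y hy => (hderiv y (interior_subset hy)).hasDerivWithinAt) fun y hy => ?_
    rw [interior_Icc] at hy
    have hpos : 0 < 1 + y := by linarith [hy.1]
    have : y / 3 ≤ log (1 + y) :=
      calc y / 3 ≤ y / (1 + y) := div_le_div_of_nonneg_left hy.1.le hpos (by linarith [hy.2])
        _ = 1 - (1 + y)⁻¹ := by field_simp; ring
        _ ≤ log (1 + y) := one_sub_inv_le_log_of_pos hpos
    linarith
  simpa [poissonRate_zero] using hmono ⟨le_rfl, by norm_num⟩ ⟨hx0, hx2⟩ hx0

lemma sq_div_two_le_poissonRate_neg {x : ℝ} (hx0 : 0 ≤ x) (hx1 : x < 1) :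
    x ^ 2 / 2 ≤ poissonRate (-x) := by
  have hderiv : ∀ y ∈ Icc (0 : ℝ) x,
      HasDerivAt (fun y => poissonRate (-y) - y ^ 2 / 2) (-log (1 - y) - y) y := fun y hy =>
    (((hasDerivAt_poissonRate (by linarith [hy.2])).scomp y (hasDerivAt_neg y)).sub
      ((hasDerivAt_pow 2 y).div_const 2)).congr_deriv
      (by simp only [smul_eq_mul, ← sub_eq_add_neg]; ring)
  have hmono : MonotoneOn (fun y => poissonRate (-y) - y ^ 2 / 2) (Icc 0 x) := by
    refine monotoneOn_of_hasDerivWithinAt_nonneg (convex_Icc 0 x)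
      (fun y hy => (hderiv y hy).continuousAt.continuousWithinAt)
      (fun y hy => (hderiv y (interior_subset hy)).hasDerivWithinAt) fun y hy => ?_
    rw [interior_Icc] at hy
    linarith [log_le_sub_one_of_pos (by linarith [hy.2] : 0 < 1 - y)]
  simpa [poissonRate_zero] using hmono ⟨le_rfl, hx0⟩ ⟨hx0, le_rfl⟩ hx0

section SubPoisson

variable {Ω : Type*} [MeasurableSpace Ω] {μ : Measure Ω} {X : Ω → ℝ} {m : ℝ}

structure HasSubPoissonMGF (X : Ω → ℝ) (m : ℝ) (μ : Measure Ω) : Prop where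
  integrable_exp_mul : ∀ t, Integrable (fun ω => exp (t * X ω)) μ
  mgf_le : ∀ t, mgf X μ t ≤ exp ((exp t - 1) * m)

namespace HasSubPoissonMGF

variable [IsFiniteMeasure μ]

lemma measureReal_ge_le_exp_poissonRate (h : HasSubPoissonMGF X m μ) {x : ℝ} (hx : 0 ≤ x)
    (L : ℝ) :
    μ.real {ω | (1 + x) * L ≤ X ω} ≤ exp (x * (m - L) - L * poissonRate x) := by
  have ht : exp (log (1 + x)) = 1 + x := exp_log (by linarith)
  calc μ.real {ω | (1 + x) * L ≤ X ω}
      ≤ exp (-log (1 + x) * ((1 + x) * L)) * mgf X μ (log (1 + x)) :=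
        measure_ge_le_exp_mul_mgf _ (log_nonneg (by linarith)) (h.integrable_exp_mul _)
    _ ≤ exp (-log (1 + x) * ((1 + x) * L)) * exp ((exp (log (1 + x)) - 1) * m) := by
        gcongr; exact h.mgf_le _
    _ = exp (x * (m - L) - L * poissonRate x) := by
        rw [← exp_add, ht, poissonRate]; ring_nf

lemma measureReal_le_le_exp_poissonRate (h : HasSubPoissonMGF X m μ) {x : ℝ} (hx0 : 0 ≤ x)
    (hx1 : x < 1) (L : ℝ) :
    μ.real {ω | X ω ≤ (1 - x) * L} ≤ exp (x * (L - m) - L * poissonRate (-x)) := by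
  have ht : exp (log (1 - x)) = 1 - x := exp_log (by linarith)
  calc μ.real {ω | X ω ≤ (1 - x) * L}
      ≤ exp (-log (1 - x) * ((1 - x) * L)) * mgf X μ (log (1 - x)) :=
        measure_le_le_exp_mul_mgf _ (log_nonpos (by linarith) (by linarith))
          (h.integrable_exp_mul _)
    _ ≤ exp (-log (1 - x) * ((1 - x) * L)) * exp ((exp (log (1 - x)) - 1) * m) := by
        gcongr; exact h.mgf_le _
    _ = exp (x * (L - m) - L * poissonRate (-x)) := by
        rw [← exp_add, ht, poissonRate, ← sub_eq_add_neg]; ring_nf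

lemma measureReal_ge_le_exp_sq (h : HasSubPoissonMGF X m μ) {ε L : ℝ} (hm : m ≤ 1 + L)
    (hε0 : 0 ≤ ε) (hε2 : ε ≤ 2) (hεL : 12 ≤ ε * L) :
    μ.real {ω | (1 + ε) * L ≤ X ω} ≤ exp (-(ε ^ 2 / 12) * L) := by
  refine (h.measureReal_ge_le_exp_poissonRate hε0 L).trans (exp_le_exp.2 ?_)
  have hL : 0 ≤ L := by nlinarith
  have hrate := mul_le_mul_of_nonneg_left (sq_div_six_le_poissonRate hε0 hε2) hL
  nlinarith

lemma measureReal_lt_le_exp_sq (h : HasSubPoissonMGF X m μ) (hX : ∀ ω, 0 ≤ X ω) {ε L : ℝ}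
    (hm : L ≤ m) (hε0 : 0 ≤ ε) (hL : 0 ≤ L) :
    μ.real {ω | X ω < (1 - ε) * L} ≤ exp (-(ε ^ 2 / 2) * L) := by
  rcases lt_or_ge ε 1 with hε1 | hε1
  · calc μ.real {ω | X ω < (1 - ε) * L}
        ≤ μ.real {ω | X ω ≤ (1 - ε) * L} := measureReal_mono fun _ hω => le_of_lt hω.out
      _ ≤ exp (ε * (L - m) - L * poissonRate (-ε)) :=
        h.measureReal_le_le_exp_poissonRate hε0 hε1 L
      _ ≤ exp (-(ε ^ 2 / 2) * L) := by
        have hrate := mul_le_mul_of_nonneg_left (sq_div_two_le_poissonRate_neg hε0 hε1) hL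
        gcongr
        nlinarith
  · have : {ω | X ω < (1 - ε) * L} = ∅ :=
      eq_empty_of_forall_notMem fun ω hω => by nlinarith [hX ω, hω.out]
    simp [this, exp_nonneg]

end HasSubPoissonMGF

lemma integrable_exp_mul_of_zero_or_one [IsFiniteMeasure μ] (hX : Measurable X)
    (h01 : ∀ ω, X ω = 0 ∨ X ω = 1) (t : ℝ) : Integrable (fun ω => exp (t * X ω)) μ :=
  .of_bound (by fun_prop) (exp |t|) <| ae_of_all _ fun ω => by
    rcases h01 ω with h | h <;> simp [h, le_abs_self]

lemma mgf_of_zero_or_one [IsProbabilityMeasure μ] (hX : Measurable X)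
    (h01 : ∀ ω, X ω = 0 ∨ X ω = 1) (t : ℝ) :
    mgf X μ t = 1 + (exp t - 1) * μ.real {ω | X ω = 1} := by
  have hs : MeasurableSet {ω | X ω = 1} := hX (measurableSet_singleton 1)
  have hexp : (fun ω => exp (t * X ω)) =
      fun ω => {ω | X ω = 1}.indicator (fun _ => exp t - 1) ω + 1 := by
    funext ω
    rcases h01 ω with h | h <;> simp [h]
  rw [mgf, hexp, integral_add ((integrable_const _).indicator hs) (integrable_const 1),
    integral_indicator_const _ hs]
  simp [mul_comm, add_comm]

lemma ProbabilityTheory.iIndepFun.hasSubPoissonMGF_sum [IsProbabilityMeasure μ] {ι : Type*}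
    {B : ι → Ω → ℝ} (hindep : iIndepFun B μ) (hmeas : ∀ i, Measurable (B i)) {s : Finset ι}
    (h01 : ∀ i ∈ s, ∀ ω, B i ω = 0 ∨ B i ω = 1) :
    HasSubPoissonMGF (∑ i ∈ s, B i) (∑ i ∈ s, μ.real {ω | B i ω = 1}) μ where
  integrable_exp_mul t := hindep.integrable_exp_mul_sum hmeas fun i hi =>
    integrable_exp_mul_of_zero_or_one (hmeas i) (h01 i hi) t
  mgf_le t := by
    rw [hindep.mgf_sum hmeas, Finset.mul_sum, exp_sum]
    refine Finset.prod_le_prod (fun _ _ => mgf_nonneg) fun i hi => ?_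
    rw [mgf_of_zero_or_one (hmeas i) (h01 i hi), add_comm]
    exact add_one_le_exp _

end SubPoisson

lemma sum_Icc_two_inv_sub_one_eq_harmonic (n : ℕ) :
    ∑ i ∈ Finset.Icc 2 n, 1 / ((i : ℝ) - 1) = harmonic (n - 1) := by
  cases n with
  | zero => simp
  | succ k =>
    rw [← Finset.map_add_right_Icc 1 k 1, Finset.sum_map, harmonic_eq_sum_Icc]
    simp

lemma log_le_harmonic_sub_one {n : ℕ} (hn : n ≠ 0) : log n ≤ harmonic (n - 1) := by
  obtain ⟨k, rfl⟩ := Nat.exists_eq_succ_of_ne_zero hn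
  simpa using log_add_one_le_harmonic k

lemma harmonic_sub_one_le_one_add_log (n : ℕ) : harmonic (n - 1) ≤ 1 + log n := by
  rcases Nat.lt_or_ge n 2 with hn | hn
  · interval_cases n <;> simp
  · refine (harmonic_le_one_add_log _).trans ?_
    gcongr
    · exact_mod_cast (by omega : 0 < n - 1)
    · exact_mod_cast Nat.sub_le n 1

section RootDegree

variable {Ω : Type*} [MeasurableSpace Ω] {μ : Measure Ω} [IsProbabilityMeasure μ]
  {B : ℕ → Ω → ℝ}

lemma hasSubPoissonMGF_sum_Icc_two_harmonic (hmeas : ∀ i, Measurable (B i))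
    (h01 : ∀ i, 2 ≤ i → ∀ ω, B i ω = 0 ∨ B i ω = 1)
    (hp : ∀ i, 2 ≤ i → μ {ω | B i ω = 1} = ENNReal.ofReal (1 / ((i : ℝ) - 1)))
    (hindep : iIndepFun B μ) (n : ℕ) :
    HasSubPoissonMGF (∑ i ∈ Finset.Icc 2 n, B i) (harmonic (n - 1)) μ := by
  have hmean : ∑ i ∈ Finset.Icc 2 n, μ.real {ω | B i ω = 1} = harmonic (n - 1) := by
    rw [← sum_Icc_two_inv_sub_one_eq_harmonic]
    refine Finset.sum_congr rfl fun i hi => ?_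
    have hi2 : (2 : ℝ) ≤ i := by exact_mod_cast (Finset.mem_Icc.1 hi).1
    rw [measureReal_def, hp i (Finset.mem_Icc.1 hi).1, ENNReal.toReal_ofReal]
    exact one_div_nonneg.2 (by linarith)
  exact hmean ▸ hindep.hasSubPoissonMGF_sum hmeas fun i hi => h01 i (Finset.mem_Icc.1 hi).1

lemma measureReal_abs_sum_Icc_two_sub_log_gt_le (hmeas : ∀ i, Measurable (B i))
    (h01 : ∀ i, 2 ≤ i → ∀ ω, B i ω = 0 ∨ B i ω = 1)
    (hp : ∀ i, 2 ≤ i → μ {ω | B i ω = 1} = ENNReal.ofReal (1 / ((i : ℝ) - 1)))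
    (hindep : iIndepFun B μ) {ε : ℝ} (hε0 : 0 ≤ ε) (hε2 : ε ≤ 2) {n : ℕ}
    (hεn : 12 ≤ ε * log n) :
    μ.real {ω | ε * log n < |(∑ i ∈ Finset.Icc 2 n, B i ω) - log n|} ≤
      2 * (n : ℝ) ^ (-ε ^ 2 / 12) := by
  set D := ∑ i ∈ Finset.Icc 2 n, B i
  have hD_apply : ∀ ω, D ω = ∑ i ∈ Finset.Icc 2 n, B i ω := fun ω => Finset.sum_apply ..
  have hn : n ≠ 0 := by rintro rfl; norm_num at hεn
  have hL : 0 ≤ log n := by nlinarith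
  have hD := hasSubPoissonMGF_sum_Icc_two_harmonic hmeas h01 hp hindep n
  have hD_nonneg : ∀ ω, 0 ≤ D ω := fun ω => hD_apply ω ▸ Finset.sum_nonneg fun i hi => by
    rcases h01 i (Finset.mem_Icc.1 hi).1 ω with h | h <;> simp [h]
  have hsub : {ω | ε * log n < |(∑ i ∈ Finset.Icc 2 n, B i ω) - log n|} ⊆
      {ω | (1 + ε) * log n ≤ D ω} ∪ {ω | D ω < (1 - ε) * log n} := fun ω hω => by
    rcases lt_abs.1 hω.out with h | h
    · exact Or.inl (show _ ≤ D ω by rw [hD_apply]; linarith)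
    · exact Or.inr (show D ω < _ by rw [hD_apply]; linarith)
  calc _ ≤ μ.real {ω | (1 + ε) * log n ≤ D ω} + μ.real {ω | D ω < (1 - ε) * log n} :=
        (measureReal_mono hsub).trans (measureReal_union_le _ _)
    _ ≤ exp (-(ε ^ 2 / 12) * log n) + exp (-(ε ^ 2 / 2) * log n) := add_le_add
        (hD.measureReal_ge_le_exp_sq (harmonic_sub_one_le_one_add_log n) hε0 hε2 hεn)
        (hD.measureReal_lt_le_exp_sq hD_nonneg (log_le_harmonic_sub_one hn) hε0 hL)
    _ ≤ 2 * exp (-(ε ^ 2 / 12) * log n) := by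
        have : exp (-(ε ^ 2 / 2) * log n) ≤ exp (-(ε ^ 2 / 12) * log n) := by
          gcongr; nlinarith [sq_nonneg ε]
        linarith
    _ = 2 * (n : ℝ) ^ (-ε ^ 2 / 12) := by
        rw [rpow_def_of_pos (by positivity), mul_comm (log _), neg_div]

end RootDegree

theorem root_degree_concentration {Ω : Type*} [MeasureSpace Ω]
    [IsProbabilityMeasure (ℙ : Measure Ω)]
    (B : ℕ → Ω → ℝ) (hmeas : ∀ i, Measurable (B i))
    (h01 : ∀ i, 2 ≤ i → ∀ ω, B i ω = 0 ∨ B i ω = 1)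
    (hp : ∀ i, 2 ≤ i →
      ℙ {ω | B i ω = 1} = ENNReal.ofReal (1 / ((i : ℝ) - 1)))
    (hindep : iIndepFun B ℙ)
    (ε : ℝ) (hε : 0 < ε) (hε' : ε < 3 / 2) :
    ∃ N : ℕ, ∀ n : ℕ, N ≤ n →
      (ℙ {ω | ε * Real.log n <
          |(∑ i ∈ Finset.Icc 2 n, B i ω) - Real.log n|}).toReal ≤
        2 * (n : ℝ) ^ (-ε ^ 2 / 12) := by
  refine ⟨⌈exp (12 / ε)⌉₊, fun n hN => ?_⟩
  have hexp : exp (12 / ε) ≤ n := (Nat.le_ceil _).trans (by exact_mod_cast hN)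
  have hεn : 12 ≤ ε * log n := by
    rwa [← div_le_iff₀' hε, le_log_iff_exp_le ((exp_pos _).trans_le hexp)]
  exact measureReal_abs_sum_Icc_two_sub_log_gt_le hmeas h01 hp hindep hε.le (by linarith) hεn
end

section
/- Let W be a random variable with 1/n ≤ W ≤ n almost surely, and let ℓ be a positive integer and δ ∈ (0,1) satisfy (δ/(1-δ))^ℓ + δ^ℓ ≤ 1. Then E[|ln W|^ℓ] ≤ (ln n)^ℓ · P(W ∉ (1-δ, 1+δ)) + 1. -/
open MeasureTheory ProbabilityTheory
open scoped ProbabilityTheory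

theorem abs_log_moment_bound {Ω : Type*} [MeasureSpace Ω]
    [IsProbabilityMeasure (ℙ : Measure Ω)]
    (n : ℝ) (hn : 1 ≤ n)
    (W : Ω → ℝ) (hmeas : Measurable W)
    (hW : ∀ᵐ ω ∂ℙ, 1 / n ≤ W ω ∧ W ω ≤ n)
    (ℓ : ℕ) (hℓ : 1 ≤ ℓ)
    (δ : ℝ) (hδ0 : 0 < δ) (hδ1 : δ < 1)
    (hδℓ : (δ / (1 - δ)) ^ ℓ + δ ^ ℓ ≤ 1) :
    ∫ ω, |Real.log (W ω)| ^ ℓ ≤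
      (Real.log n) ^ ℓ * (ℙ {ω | W ω ∉ Set.Ioo (1 - δ) (1 + δ)}).toReal + 1 := by
  set S : Set Ω := {ω | W ω ∉ Set.Ioo (1 - δ) (1 + δ)} with hS
  have hSm : MeasurableSet S := (hmeas measurableSet_Ioo).compl
  have h1δ : (0:ℝ) < 1 - δ := by linarith
  -- the dominating function
  set g : Ω → ℝ := fun ω => S.indicator (fun _ => (Real.log n) ^ ℓ) ω + 1 with hg
  have hgint : Integrable g ℙ :=
    ((integrable_const ((Real.log n) ^ ℓ)).indicator hSm).add (integrable_const 1)
  have hbound : ∀ᵐ ω ∂ℙ, |Real.log (W ω)| ^ ℓ ≤ g ω := by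
    filter_upwards [hW] with ω hω
    obtain ⟨h1, h2⟩ := hω
    have hWpos : 0 < W ω := lt_of_lt_of_le (by positivity) h1
    by_cases hmem : W ω ∈ Set.Ioo (1 - δ) (1 + δ)
    · have hSnot : ω ∉ S := by simpa [hS] using hmem
      have habs : |Real.log (W ω)| ≤ δ / (1 - δ) := by
        rcases le_or_gt 1 (W ω) with h | h
        · have hlog0 : 0 ≤ Real.log (W ω) := Real.log_nonneg h
          rw [abs_of_nonneg hlog0]
          have := Real.log_le_sub_one_of_pos hWpos
          have hle : Real.log (W ω) ≤ δ := by
            have : W ω - 1 ≤ δ := by have := hmem.2; linarith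
            linarith
          calc Real.log (W ω) ≤ δ := hle
            _ ≤ δ / (1 - δ) := by
                rw [le_div_iff₀ h1δ]; nlinarith
        · have hlog0 : Real.log (W ω) ≤ 0 := Real.log_nonpos (le_of_lt hWpos) h.le
          rw [abs_of_nonpos hlog0]
          have hinv : -Real.log (W ω) = Real.log (1 / (W ω)) := by
            rw [Real.log_div one_ne_zero (ne_of_gt hWpos), Real.log_one]; ring
          rw [hinv]
          have h1W : 0 < 1 / W ω := by positivity
          have := Real.log_le_sub_one_of_pos h1W
          have hWgt : 1 - δ < W ω := hmem.1
          have : 1 / W ω - 1 ≤ δ / (1 - δ) := by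
            rw [div_sub' (ne_of_gt hWpos), div_le_div_iff₀ hWpos h1δ]
            nlinarith
          linarith
      have hpow : |Real.log (W ω)| ^ ℓ ≤ (δ / (1 - δ)) ^ ℓ :=
        pow_le_pow_left₀ (abs_nonneg _) habs ℓ
      have hδpow : (0:ℝ) ≤ δ ^ ℓ := by positivity
      have : |Real.log (W ω)| ^ ℓ ≤ 1 := by linarith
      simp [hg, Set.indicator_of_notMem hSnot]
      linarith
    · have hSin : ω ∈ S := hmem
      have habs : |Real.log (W ω)| ≤ Real.log n := by
        rw [abs_le]
        constructor
        · have : Real.log (1 / n) ≤ Real.log (W ω) :=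
            Real.log_le_log (by positivity) h1
          rw [Real.log_div one_ne_zero (by linarith : n ≠ 0), Real.log_one] at this
          linarith
        · exact Real.log_le_log hWpos h2
      have hpow : |Real.log (W ω)| ^ ℓ ≤ (Real.log n) ^ ℓ :=
        pow_le_pow_left₀ (abs_nonneg _) habs ℓ
      simp [hg, Set.indicator_of_mem hSin]
      linarith
  have hfnn : 0 ≤ᵐ[ℙ] fun ω => |Real.log (W ω)| ^ ℓ := by
    filter_upwards with ω; positivity
  have hint : ∫ ω, |Real.log (W ω)| ^ ℓ ≤ ∫ ω, g ω :=
    integral_mono_of_nonneg hfnn hgint hbound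
  have hgval : ∫ ω, g ω = (Real.log n) ^ ℓ * (ℙ S).toReal + 1 := by
    rw [hg, integral_add ((integrable_const ((Real.log n) ^ ℓ)).indicator hSm)
      (integrable_const 1), integral_indicator_const _ hSm, integral_const]
    simp [mul_comm, measureReal_def]
  rw [hS] at hgval
  linarith [hint, hgval.le, hgval.ge]
end
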